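/- arXiv:2303.13895 — 4 statements merged into one kernel-verified Lean document; each statement's English description precedes it below -/
import Mathlib

section
/- Under the multidimensional moment-quadrature setup, the quadrature is exact for every polynomial of total degree at most 2N−1; equivalently, for every multi-index n ∈ ℕ^d with |n| ≤ 2N−1, the quadrature sum ∑_{q ∈ {1,…,S}^d} w_q · (λ_q)^n equals the moment ∫ x^n dμ(x). -/
/-!
Write `χ a := L.row a = Lᵀ eₐ` for the rows of the Cholesky factor. Since `H i` and `G` are
Gram-type matrices of monomials, the column `a` of `H i` is the column `b` of `G` whenever
`xᵢ · x^(ι a) = x^(ι b)`, hence `Ĥᵢ χ a = χ b`: on the rows of `L`, `Ĥᵢ` acts as multiplication by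
`xᵢ` as long as the degree stays `≤ N - 1`. Moreover `⟨χ a, Ĥᵢ χ b⟩ = (H i) a b`.

By the spectral decompositions `Ĥᵢ ^ k = ∑ λᵏ u uᵀ`, the quadrature sum is
`⟨e₀, Ĥ₀ ^ n₀ ⋯ Ĥ_d ^ n_d e₀⟩`, and `e₀ = ± χ 0` because `L` is lower triangular with
`L₀₀² = G₀₀ = 1`. Cut the word `0^n₀ ⋯ d^n_d`, of length `≤ 2N - 1`, as `A i B` with both `A`
and `B` of length `≤ N - 1`. By symmetry of the `Ĥⱼ` the value becomes
`⟨χ a, Ĥᵢ χ b⟩ = ∫ xᵢ x^(ι a + ι b) dμ`, where `x^(ι a)` and `x^(ι b)` are the monomials of `A` and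
`B`; this is the moment `∫ xⁿ dμ`.
-/

open MeasureTheory Matrix Finset

theorem List.sum_univ_count_eq_length {κ : Type*} [Fintype κ] [DecidableEq κ] (l : List κ) :
    ∑ j, l.count j = l.length := by
  simpa using Multiset.sum_count_eq_card (s := univ) (m := (l : Multiset κ)) (by simp)

theorem List.exists_eq_append_cons_of_length_le {α : Type*} {l : List α} {M : ℕ} (hl : l ≠ [])
    (hlen : l.length ≤ 2 * M + 1) :
    ∃ A a B, l = A ++ a :: B ∧ A.length ≤ M ∧ B.length ≤ M := by
  have hk : min M (l.length - 1) < l.length := by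
    have := List.length_pos_iff.mpr hl
    omega
  refine ⟨l.take (min M (l.length - 1)), l[min M (l.length - 1)],
    l.drop (min M (l.length - 1) + 1), ?_, ?_, ?_⟩
  · rw [← List.drop_eq_getElem_cons hk, List.take_append_drop]
  · simp
  · simp only [List.length_drop]; omega

def monomialWord {k : ℕ} (n : Fin k → ℕ) : List (Fin k) :=
  (List.ofFn fun i => List.replicate (n i) i).flatten

theorem count_monomialWord {k : ℕ} (n : Fin k → ℕ) (j : Fin k) :
    (monomialWord n).count j = n j := by
  simp [monomialWord, List.count_flatten, List.sum_ofFn, List.count_replicate]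

theorem prod_map_monomialWord {M : Type*} [Monoid M] {k : ℕ} (f : Fin k → M) (n : Fin k → ℕ) :
    ((monomialWord n).map f).prod = (List.ofFn fun i => f i ^ n i).prod := by
  simp [monomialWord, List.map_flatten, List.prod_flatten, Function.comp_def]

theorem mul_prod_pow_eq_prod_pow_add_single {κ M : Type*} [Fintype κ] [DecidableEq κ]
    [CommMonoid M] (x : κ → M) (i : κ) (m : κ → ℕ) :
    x i * ∏ j, x j ^ m j = ∏ j, x j ^ (m + Pi.single i 1 : κ → ℕ) j := by
  simp only [Pi.add_apply, pow_add, prod_mul_distrib, Pi.single_apply, pow_ite, pow_one, pow_zero,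
    prod_ite_eq', mem_univ, if_true, mul_comm]

namespace Matrix

variable {n R : Type*} [Fintype n] [CommRing R]

theorem sum_vecMulVec_self_eq_one [DecidableEq n] (u : n → n → R)
    (hu : ∀ a b, u a ⬝ᵥ u b = if a = b then 1 else 0) :
    ∑ m, vecMulVec (u m) (u m) = 1 := by
  have hU : of u * (of u)ᵀ = 1 := by
    ext a b
    exact hu a b
  ext r s
  rw [← mul_eq_one_comm.mp hU]
  simp [Matrix.sum_apply, vecMulVec_apply, Matrix.mul_apply]

theorem pow_eq_sum_pow_smul_vecMulVec [DecidableEq n] {A : Matrix n n R} {lam : n → R}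
    {u : n → n → R} (hu : ∀ a b, u a ⬝ᵥ u b = if a = b then 1 else 0)
    (heig : ∀ m, A *ᵥ u m = lam m • u m) (k : ℕ) :
    A ^ k = ∑ m, lam m ^ k • vecMulVec (u m) (u m) := by
  have heig_pow : ∀ m, A ^ k *ᵥ u m = lam m ^ k • u m := fun m => by
    induction k with
    | zero => simp
    | succ k ih => rw [pow_succ, ← mulVec_mulVec, heig, mulVec_smul, ih, smul_smul, pow_succ']
  calc A ^ k = A ^ k * ∑ m, vecMulVec (u m) (u m) := by rw [sum_vecMulVec_self_eq_one u hu, mul_one]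
    _ = _ := by simp only [Finset.mul_sum, mul_vecMulVec, heig_pow, smul_vecMulVec]

theorem vecMul_sum_smul_vecMulVec_self {ι : Type*} [Fintype ι] (a : n → R) (c : ι → R)
    (v : ι → n → R) :
    a ᵥ* ∑ m, c m • vecMulVec (v m) (v m) = ∑ m, (c m * (a ⬝ᵥ v m)) • v m := by
  simp only [vecMul_sum, vecMul_smul, vecMul_vecMulVec, smul_smul]

theorem vecMul_list_prod_ofFn_eq_sum [DecidableEq n] {ι : Type*} [Fintype ι] {k : ℕ}
    (v : Fin (k + 1) → ι → n → R) (c : Fin (k + 1) → ι → R) (M : Fin (k + 1) → Matrix n n R)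
    (hM : ∀ i, M i = ∑ m, c i m • vecMulVec (v i m) (v i m)) (a : n → R) :
    a ᵥ* (List.ofFn M).prod = ∑ q : Fin (k + 1) → ι,
      ((a ⬝ᵥ v 0 (q 0)) *
        (∏ i : Fin k, v i.castSucc (q i.castSucc) ⬝ᵥ v i.succ (q i.succ)) *
        ∏ i, c i (q i)) • v (Fin.last k) (q (Fin.last k)) := by
  induction k with
  | zero =>
    rw [List.ofFn_succ, List.ofFn_zero, List.prod_singleton, hM,
      vecMul_sum_smul_vecMulVec_self, ← (Equiv.funUnique (Fin 1) ι).symm.sum_comp]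
    simp [mul_comm]
  | succ k ih =>
    rw [List.ofFn_succ', List.prod_concat, ← vecMul_vecMul, ih (fun i => v i.castSucc)
      (fun i => c i.castSucc) (fun i => M i.castSucc) (fun i => hM _), hM (Fin.last _), sum_vecMul]
    conv_rhs => rw [← (Fin.snocEquiv fun _ => ι).sum_comp, Fintype.sum_prod_type, Finset.sum_comm]
    refine Finset.sum_congr rfl fun q _ => ?_
    rw [smul_vecMul, vecMul_sum_smul_vecMulVec_self, Finset.smul_sum]
    refine Finset.sum_congr rfl fun m _ => ?_
    simp only [Fin.snocEquiv_apply, Fin.prod_univ_castSucc, Fin.succ_castSucc, Fin.succ_last,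
      ← Fin.castSucc_zero, Fin.snoc_castSucc, Fin.snoc_last, smul_smul]
    congr 1
    ring

variable [DecidableEq n]

theorem IsSymm.inv_mul_mul_transpose_inv {H : Matrix n n R} (hH : H.IsSymm) (L : Matrix n n R) :
    (L⁻¹ * H * Lᵀ⁻¹).IsSymm := by
  rw [IsSymm, transpose_mul, transpose_mul, transpose_nonsing_inv, transpose_nonsing_inv,
    transpose_transpose, hH.eq, Matrix.mul_assoc]

theorem row_eq_transpose_mulVec_single (L : Matrix n n R) (a : n) :
    L.row a = Lᵀ *ᵥ Pi.single a 1 := by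
  rw [mulVec_single_one, col_transpose]

theorem inv_mul_mul_transpose_inv_mulVec_row {G H L : Matrix n n R} (hL : IsUnit L.det)
    (hLLT : L * Lᵀ = G) {a b : n} (hab : H.col a = G.col b) :
    (L⁻¹ * H * Lᵀ⁻¹) *ᵥ L.row a = L.row b := by
  have hLT : IsUnit Lᵀ.det := by rwa [det_transpose]
  calc (L⁻¹ * H * Lᵀ⁻¹) *ᵥ L.row a = (L⁻¹ * H * Lᵀ⁻¹ * Lᵀ) *ᵥ Pi.single a 1 := by
        rw [row_eq_transpose_mulVec_single, mulVec_mulVec]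
    _ = L⁻¹ *ᵥ (G *ᵥ Pi.single b 1) := by
        rw [Matrix.mul_assoc, nonsing_inv_mul _ hLT, Matrix.mul_one, ← mulVec_mulVec,
          mulVec_single_one, mulVec_single_one, hab]
    _ = L.row b := by
        rw [← hLLT, mulVec_mulVec, ← Matrix.mul_assoc, nonsing_inv_mul _ hL, Matrix.one_mul,
          row_eq_transpose_mulVec_single]

theorem row_dotProduct_inv_mul_mul_transpose_inv_mulVec_row {L : Matrix n n R}
    (hL : IsUnit L.det) (H : Matrix n n R) (a b : n) :
    L.row a ⬝ᵥ ((L⁻¹ * H * Lᵀ⁻¹) *ᵥ L.row b) = H a b := by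
  have hLT : IsUnit Lᵀ.det := by rwa [det_transpose]
  rw [row_eq_transpose_mulVec_single L b, mulVec_mulVec, Matrix.mul_assoc,
    nonsing_inv_mul _ hLT, Matrix.mul_one, ← single_one_vecMul, dotProduct_mulVec,
    vecMul_vecMul, ← Matrix.mul_assoc, mul_nonsing_inv _ hL, Matrix.one_mul, single_one_vecMul]
  simp

theorem exists_list_prod_mulVec_eq_row {κ : Type*} [Fintype κ] [DecidableEq κ]
    {A : κ → Matrix n n R} {V : Matrix n n R} {ι : n → κ → ℕ} {M : ℕ}
    (hsurj : ∀ m : κ → ℕ, ∑ j, m j ≤ M → ∃ a, ι a = m)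
    (hshift : ∀ i a b, ι b = ι a + Pi.single i 1 → A i *ᵥ V.row a = V.row b)
    {z : n} (hz : ι z = 0) (ℓ : List κ) (hℓ : ℓ.length ≤ M) :
    ∃ a, ι a = (ℓ.count ·) ∧ (ℓ.map A).prod *ᵥ V.row z = V.row a := by
  induction ℓ with
  | nil => exact ⟨z, by simp [hz, Pi.zero_def], by simp⟩
  | cons i t ih =>
    obtain ⟨a, ha, hprod⟩ := ih (by simp at hℓ; omega)
    obtain ⟨b, hb⟩ := hsurj ((i :: t).count ·) (by rwa [List.sum_univ_count_eq_length])
    refine ⟨b, hb, ?_⟩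
    rw [List.map_cons, List.prod_cons, ← mulVec_mulVec, hprod]
    refine hshift i a b ?_
    ext j
    simp [hb, ha, List.count_cons, Pi.single_apply]
    grind

theorem row_eq_single_of_lower {ι : Type*} [LinearOrder ι]
    {L : Matrix ι ι R} (hL : ∀ a b, a < b → L a b = 0) {z : ι} (hz : IsBot z) :
    L.row z = Pi.single z (L z z) := funext fun r => by
  rcases eq_or_ne r z with rfl | hr
  · simp
  · simp [hr, hL z r (lt_of_le_of_ne (hz r) hr.symm)]

end Matrix

theorem row_dotProduct_list_prod_mulVec_row_eq_integral
    {κ n : Type*} [Fintype κ] [DecidableEq κ] [Fintype n] [DecidableEq n]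
    {μ : Measure (κ → ℝ)} {ι : n → κ → ℕ} {M : ℕ}
    (hsurj : ∀ m : κ → ℕ, ∑ j, m j ≤ M → ∃ a, ι a = m)
    {G L : Matrix n n ℝ} {H : κ → Matrix n n ℝ}
    (hG : ∀ a b, G a b = ∫ x, ∏ j, x j ^ (ι a j + ι b j) ∂μ)
    (hH : ∀ i a b, H i a b = ∫ x, x i * ∏ j, x j ^ (ι a j + ι b j) ∂μ)
    (hL : IsUnit L.det) (hLLT : L * Lᵀ = G) {z : n} (hz : ι z = 0)
    (ℓ : List κ) (hℓ : ℓ.length ≤ 2 * M + 1) :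
    L.row z ⬝ᵥ ((ℓ.map fun i => L⁻¹ * H i * Lᵀ⁻¹).prod *ᵥ L.row z)
      = ∫ x, ∏ j, x j ^ ℓ.count j ∂μ := by
  set Hhat : κ → Matrix n n ℝ := fun i => L⁻¹ * H i * Lᵀ⁻¹
  have hmoment : ∀ i a b (m : κ → ℕ), ι a + ι b + Pi.single i 1 = m →
      H i a b = ∫ x, ∏ j, x j ^ m j ∂μ := by
    rintro i a b m rfl
    simp_rw [hH, mul_prod_pow_eq_prod_pow_add_single]
    rfl
  have hshift : ∀ i a b, ι b = ι a + Pi.single i 1 → Hhat i *ᵥ L.row a = L.row b :=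
    fun i a b hab => inv_mul_mul_transpose_inv_mulVec_row hL hLLT <| funext fun r => by
      rw [col_apply, col_apply, hmoment i r a (ι r + ι b) (by rw [hab, add_assoc]), hG]
      rfl
  have hsymm : ∀ i, (Hhat i).IsSymm := fun i =>
    (IsSymm.ext fun a b => by simp_rw [hH, add_comm]).inv_mul_mul_transpose_inv L
  rcases eq_or_ne ℓ [] with rfl | hne
  · calc L.row z ⬝ᵥ (([].map Hhat).prod *ᵥ L.row z) = (L * Lᵀ) z z := by simp [mul_apply']; rfl
      _ = _ := by simp [hLLT, hG, hz]
  obtain ⟨A, i, B, rfl, hA, hB⟩ := List.exists_eq_append_cons_of_length_le hne hℓ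
  obtain ⟨a, ha, hAa⟩ := exists_list_prod_mulVec_eq_row hsurj hshift hz A.reverse (by simpa)
  obtain ⟨b, hb, hBb⟩ := exists_list_prod_mulVec_eq_row hsurj hshift hz B (by omega)
  have hAT : (A.map Hhat).prodᵀ = (A.reverse.map Hhat).prod := by
    rw [transpose_list_prod, List.map_map, ← List.map_reverse]
    exact congrArg _ (List.map_congr_left fun i _ => (hsymm i).eq)
  calc L.row z ⬝ᵥ (((A ++ i :: B).map Hhat).prod *ᵥ L.row z)
      = ((A.map Hhat).prodᵀ *ᵥ L.row z) ⬝ᵥ (Hhat i *ᵥ ((B.map Hhat).prod *ᵥ L.row z)) := by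
        rw [List.map_append, List.map_cons, List.prod_append, List.prod_cons, ← mulVec_mulVec,
          ← mulVec_mulVec, dotProduct_mulVec, mulVec_transpose]
    _ = H i a b := by rw [hAT, hAa, hBb, row_dotProduct_inv_mul_mul_transpose_inv_mulVec_row hL]
    _ = _ := hmoment i a b _ <| funext fun j => by
        simp [ha, hb, List.count_append, List.count_cons, Pi.single_apply]
        grind

theorem moment_quadrature_polynomial_exactness_general
    (d N S : ℕ)
    (μ : Measure (Fin (d + 1) → ℝ)) [IsProbabilityMeasure μ]
    (ι : Fin S → (Fin (d + 1) → ℕ))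
    (hι_surj : ∀ n : Fin (d + 1) → ℕ, (∑ i, n i) ≤ N - 1 → ∃ u, ι u = n)
    (hι0 : ∀ u : Fin S, (u : ℕ) = 0 → ι u = 0)
    (G : Matrix (Fin S) (Fin S) ℝ)
    (hG : ∀ u v, G u v = ∫ x, ∏ i, x i ^ (ι u i + ι v i) ∂μ)
    (hGpd : G.PosDef)
    (L : Matrix (Fin S) (Fin S) ℝ)
    (hL_lower : ∀ u v : Fin S, u < v → L u v = 0)
    (hLLT : L * L.transpose = G)
    (H : Fin (d + 1) → Matrix (Fin S) (Fin S) ℝ)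
    (hH : ∀ i u v, H i u v = ∫ x, x i * ∏ j, x j ^ (ι u j + ι v j) ∂μ)
    (Hhat : Fin (d + 1) → Matrix (Fin S) (Fin S) ℝ)
    (hHhat : ∀ i, Hhat i = L⁻¹ * H i * (L.transpose)⁻¹)
    (lam : Fin (d + 1) → Fin S → ℝ)
    (u : Fin (d + 1) → Fin S → (Fin S → ℝ))
    (hu_orth : ∀ i n m, u i n ⬝ᵥ u i m = if n = m then (1 : ℝ) else 0)
    (heig : ∀ i n, (Hhat i) *ᵥ u i n = lam i n • u i n)
    (e₀ : Fin S → ℝ)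
    (he₀ : ∀ j : Fin S, e₀ j = if (j : ℕ) = 0 then (1 : ℝ) else 0)
    (w : (Fin (d + 1) → Fin S) → ℝ)
    (hw : ∀ q : Fin (d + 1) → Fin S, w q =
      (e₀ ⬝ᵥ u 0 (q 0)) *
      (∏ i : Fin d, (u i.castSucc (q i.castSucc) ⬝ᵥ u i.succ (q i.succ))) *
      (u (Fin.last d) (q (Fin.last d)) ⬝ᵥ e₀)) :
    ∀ n : Fin (d + 1) → ℕ, (∑ i, n i) ≤ 2 * N - 1 →
      ∑ q : Fin (d + 1) → Fin S, w q * ∏ i, (lam i (q i)) ^ n i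
        = ∫ x, ∏ i, x i ^ n i ∂μ := by
  intro n hn
  obtain ⟨z₀, -⟩ := hι_surj 0 (by simp)
  set z : Fin S := ⟨0, z₀.pos⟩
  have hL : IsUnit L.det :=
    (isUnit_iff_isUnit_det L).mp (isUnit_of_mul_isUnit_left (hLLT ▸ hGpd.isUnit))
  have hrow : L.row z = Pi.single z (L z z) :=
    row_eq_single_of_lower hL_lower fun r => Fin.le_def.mpr (Nat.zero_le r)
  have hLzz : L z z * L z z = 1 := by
    have := hG z z
    rw [← hLLT, hι0 z rfl] at this
    simpa [mul_apply', ← row_apply', hrow] using this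
  have he : e₀ = Pi.single z 1 := funext fun j => by
    simp [he₀, Pi.single_apply, Fin.ext_iff, z]
  have hquad : ∑ q, w q * ∏ i, lam i (q i) ^ n i
      = e₀ ⬝ᵥ (((monomialWord n).map Hhat).prod *ᵥ e₀) := by
    rw [prod_map_monomialWord, dotProduct_mulVec,
      vecMul_list_prod_ofFn_eq_sum u (fun i m => lam i m ^ n i) _
        fun i => pow_eq_sum_pow_smul_vecMulVec (hu_orth i) (heig i) (n i),
      sum_dotProduct]
    refine sum_congr rfl fun q _ => ?_
    rw [hw, smul_dotProduct, smul_eq_mul]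
    ring
  have hmoment := row_dotProduct_list_prod_mulVec_row_eq_integral hι_surj hG hH hL hLLT
    (hι0 z rfl) (monomialWord n)
    (by simp [← List.sum_univ_count_eq_length, count_monomialWord]; omega)
  simp only [count_monomialWord, ← hHhat] at hmoment
  rw [hquad, ← hmoment, he, hrow]
  simp [← mul_assoc, hLzz]

/-- Under the multidimensional moment-quadrature setup (dimension `d + 1 ≥ 1`,
order `N ≥ 1`, `S = C(N-1+(d+1), d+1)` basis monomials of total degree `≤ N-1`, Gram matrix `G`
positive definite with lower-triangular Cholesky factor `L`, Hankel matrices `H i`,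
orthonormalised `Hhat i = L⁻¹ * H i * (Lᵀ)⁻¹` with orthonormal eigenvectors `u i n` and
eigenvalues `lam i n`), the quadrature with nodes `λ_q = (lam i (q i))_i` and weights
`w q = ⟨e₀, u⁽¹⁾_{q₁}⟩ (∏ ⟨u⁽ⁱ⁾_{qᵢ}, u⁽ⁱ⁺¹⁾_{q_{i+1}}⟩) ⟨u⁽ᵈ⁾_{q_d}, e₀⟩` is exact for every
monomial (hence polynomial) of total degree at most `2N - 1`. -/
theorem moment_quadrature_polynomial_exactness
    (d N S : ℕ) (hN : 1 ≤ N)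
    (hS : S = Nat.choose (N - 1 + (d + 1)) (d + 1))
    (μ : Measure (Fin (d + 1) → ℝ)) [IsProbabilityMeasure μ]
    (hmom : ∀ n : Fin (d + 1) → ℕ, (∑ i, n i) ≤ 2 * N - 1 →
      Integrable (fun x => ∏ i, x i ^ n i) μ)
    (ι : Fin S → (Fin (d + 1) → ℕ))
    (hι_inj : Function.Injective ι)
    (hι_deg : ∀ u, (∑ i, ι u i) ≤ N - 1)
    (hι_surj : ∀ n : Fin (d + 1) → ℕ, (∑ i, n i) ≤ N - 1 → ∃ u, ι u = n)
    (hι0 : ∀ u : Fin S, (u : ℕ) = 0 → ι u = 0)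
    (G : Matrix (Fin S) (Fin S) ℝ)
    (hG : ∀ u v, G u v = ∫ x, ∏ i, x i ^ (ι u i + ι v i) ∂μ)
    (hGpd : G.PosDef)
    (L : Matrix (Fin S) (Fin S) ℝ)
    (hL_lower : ∀ u v : Fin S, u < v → L u v = 0)
    (hLLT : L * L.transpose = G)
    (H : Fin (d + 1) → Matrix (Fin S) (Fin S) ℝ)
    (hH : ∀ i u v, H i u v = ∫ x, x i * ∏ j, x j ^ (ι u j + ι v j) ∂μ)
    (Hhat : Fin (d + 1) → Matrix (Fin S) (Fin S) ℝ)
    (hHhat : ∀ i, Hhat i = L⁻¹ * H i * (L.transpose)⁻¹)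
    (lam : Fin (d + 1) → Fin S → ℝ)
    (u : Fin (d + 1) → Fin S → (Fin S → ℝ))
    (hu_orth : ∀ i n m, u i n ⬝ᵥ u i m = if n = m then (1 : ℝ) else 0)
    (heig : ∀ i n, (Hhat i) *ᵥ u i n = lam i n • u i n)
    (e₀ : Fin S → ℝ)
    (he₀ : ∀ j : Fin S, e₀ j = if (j : ℕ) = 0 then (1 : ℝ) else 0)
    (w : (Fin (d + 1) → Fin S) → ℝ)
    (hw : ∀ q : Fin (d + 1) → Fin S, w q =
      (e₀ ⬝ᵥ u 0 (q 0)) *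
      (∏ i : Fin d, (u i.castSucc (q i.castSucc) ⬝ᵥ u i.succ (q i.succ))) *
      (u (Fin.last d) (q (Fin.last d)) ⬝ᵥ e₀)) :
    ∀ n : Fin (d + 1) → ℕ, (∑ i, n i) ≤ 2 * N - 1 →
      ∑ q : Fin (d + 1) → Fin S, w q * ∏ i, (lam i (q i)) ^ n i
        = ∫ x, ∏ i, x i ^ n i ∂μ :=
  moment_quadrature_polynomial_exactness_general d N S μ ι hι_surj hι0 G hG hGpd L hL_lower hLLT H
    hH Hhat hHhat lam u hu_orth heig e₀ he₀ w hw
end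

section
/- Let μ be a probability measure on ℝ^d with finite absolute moments up to degree 2N−1 whose support is contained in the compact hypercube D = ∏_{j=1}^d [a_j, b_j]. Under the multidimensional moment-quadrature setup, for each coordinate i = 1,…,d, every eigenvalue of the symmetric matrix Ĥ_i = L⁻¹ H_i (Lᵀ)⁻¹ lies in the interval [a_i, b_i]; consequently every quadrature node λ_q lies in D. -/
open MeasureTheory Matrix Finset

/-- Let `μ` be a probability measure on `ℝ^d` with finite absolute moments up
to degree `2N - 1` whose support is contained in the compact hypercube `D = ∏ⱼ [aⱼ, bⱼ]`. Under
the multidimensional moment-quadrature setup, for each coordinate `i` every eigenvalue of the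
symmetric matrix `Ĥᵢ = L⁻¹ Hᵢ (Lᵀ)⁻¹` lies in `[aᵢ, bᵢ]`; consequently every quadrature node
`λ_q` lies in `D`. -/
theorem moment_quadrature_nodes_in_support_hypercube
    (d N S : ℕ) (hd : 1 ≤ d) (hN : 1 ≤ N)
    (hS : S = Nat.choose (N - 1 + d) d)
    (a b : Fin d → ℝ)
    (μ : Measure (Fin d → ℝ)) [IsProbabilityMeasure μ]
    (hsupp : ∀ᵐ x ∂μ, ∀ i, x i ∈ Set.Icc (a i) (b i))
    (hmom : ∀ n : Fin d → ℕ, (∑ i, n i) ≤ 2 * N - 1 →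
      Integrable (fun x => ∏ i, x i ^ n i) μ)
    (ι : Fin S → (Fin d → ℕ))
    (hι_inj : Function.Injective ι)
    (hι_deg : ∀ u, (∑ i, ι u i) ≤ N - 1)
    (hι_surj : ∀ n : Fin d → ℕ, (∑ i, n i) ≤ N - 1 → ∃ u, ι u = n)
    (hι0 : ∀ u : Fin S, (u : ℕ) = 0 → ι u = 0)
    (G : Matrix (Fin S) (Fin S) ℝ)
    (hG : ∀ u v, G u v = ∫ x, ∏ i, x i ^ (ι u i + ι v i) ∂μ)
    (hGpd : G.PosDef)
    (L : Matrix (Fin S) (Fin S) ℝ)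
    (hL_lower : ∀ u v : Fin S, u < v → L u v = 0)
    (hLLT : L * L.transpose = G)
    (H : Fin d → Matrix (Fin S) (Fin S) ℝ)
    (hH : ∀ i u v, H i u v = ∫ x, x i * ∏ j, x j ^ (ι u j + ι v j) ∂μ)
    (Hhat : Fin d → Matrix (Fin S) (Fin S) ℝ)
    (hHhat : ∀ i, Hhat i = L⁻¹ * H i * (L.transpose)⁻¹)
    (lam : Fin d → Fin S → ℝ)
    (u : Fin d → Fin S → (Fin S → ℝ))
    (hu_orth : ∀ i n m, u i n ⬝ᵥ u i m = if n = m then (1 : ℝ) else 0)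
    (heig : ∀ i n, (Hhat i) *ᵥ u i n = lam i n • u i n) :
    (∀ (i : Fin d) (c : ℝ) (v : Fin S → ℝ), v ≠ 0 → Hhat i *ᵥ v = c • v →
        c ∈ Set.Icc (a i) (b i)) ∧
    (∀ q : Fin d → Fin S,
        (fun i => lam i (q i)) ∈ Set.univ.pi fun i => Set.Icc (a i) (b i)) := by
  classical
  -- L is invertible
  have hdetG : G.det = L.det * L.det := by
    rw [← hLLT, Matrix.det_mul, Matrix.det_transpose]
  have hLdet : IsUnit L.det := by
    have hpos := hGpd.det_pos
    rw [hdetG] at hpos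
    refine isUnit_iff_ne_zero.2 fun h => ?_
    rw [h] at hpos; simp at hpos
  have hLTdet : IsUnit L.transpose.det := by
    rw [Matrix.det_transpose]; exact hLdet
  have hLTinv : L.transpose * (L.transpose)⁻¹ = 1 := Matrix.mul_nonsing_inv _ hLTdet
  -- basic product identity
  have hprod : ∀ (u' v' : Fin S) (x : Fin d → ℝ),
      (∏ j, x j ^ (ι u' j + ι v' j)) = (∏ j, x j ^ ι u' j) * (∏ j, x j ^ ι v' j) := by
    intro u' v' x
    rw [← Finset.prod_mul_distrib]
    simp [pow_add]
  -- pointwise expansion of g x * p x ^ 2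
  have hpt : ∀ (g : (Fin d → ℝ) → ℝ) (w : Fin S → ℝ) (x : Fin d → ℝ),
      g x * (∑ u', w u' * ∏ j, x j ^ ι u' j) ^ 2
        = ∑ u', ∑ v', (w u' * w v') * (g x * ∏ j, x j ^ (ι u' j + ι v' j)) := by
    intro g w x
    rw [sq, Finset.sum_mul_sum, Finset.mul_sum]
    refine Finset.sum_congr rfl fun u' _ => ?_
    rw [Finset.mul_sum]
    refine Finset.sum_congr rfl fun v' _ => ?_
    rw [hprod]; ring
  -- quadratic form as an integral
  have key : ∀ (g : (Fin d → ℝ) → ℝ) (M : Matrix (Fin S) (Fin S) ℝ),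
      (∀ u' v' : Fin S, Integrable (fun x => g x * ∏ j, x j ^ (ι u' j + ι v' j)) μ) →
      (∀ u' v' : Fin S, M u' v' = ∫ x, g x * ∏ j, x j ^ (ι u' j + ι v' j) ∂μ) →
      ∀ w : Fin S → ℝ,
        w ⬝ᵥ (M *ᵥ w) = ∫ x, g x * (∑ u', w u' * ∏ j, x j ^ ι u' j) ^ 2 ∂μ := by
    intro g M hint hM w
    have h1 : (fun x => g x * (∑ u', w u' * ∏ j, x j ^ ι u' j) ^ 2)
        = fun x => ∑ u', ∑ v', (w u' * w v') * (g x * ∏ j, x j ^ (ι u' j + ι v' j)) :=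
      funext fun x => hpt g w x
    rw [h1, integral_finset_sum _
      (fun u' _ => integrable_finset_sum _ fun v' _ => (hint u' v').const_mul _)]
    simp only [dotProduct, mulVec, Finset.mul_sum]
    refine Finset.sum_congr rfl fun u' _ => ?_
    rw [integral_finset_sum _ (fun v' _ => (hint u' v').const_mul _)]
    refine Finset.sum_congr rfl fun v' _ => ?_
    rw [MeasureTheory.integral_const_mul, ← hM]
    ring
  -- main eigenvalue bound
  have main : ∀ (i : Fin d) (c : ℝ) (v : Fin S → ℝ), v ≠ 0 → Hhat i *ᵥ v = c • v →
      c ∈ Set.Icc (a i) (b i) := by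
    intro i c v hv heq
    set w : Fin S → ℝ := (L.transpose)⁻¹ *ᵥ v with hw
    -- integrability of the monomials
    have hint1 : ∀ u' v' : Fin S, Integrable (fun x => (1 : ℝ) * ∏ j, x j ^ (ι u' j + ι v' j)) μ := by
      intro u' v'
      have hdeg : (∑ j, (ι u' j + ι v' j)) ≤ 2 * N - 1 := by
        rw [Finset.sum_add_distrib]
        have h1 := hι_deg u'; have h2 := hι_deg v'; omega
      simpa using hmom (fun j => ι u' j + ι v' j) hdeg
    have hint2 : ∀ u' v' : Fin S, Integrable (fun x => x i * ∏ j, x j ^ (ι u' j + ι v' j)) μ := by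
      intro u' v'
      have hdeg : (∑ j, (ι u' j + ι v' j + if j = i then 1 else 0)) ≤ 2 * N - 1 := by
        rw [Finset.sum_add_distrib, Finset.sum_add_distrib]
        have h1 := hι_deg u'; have h2 := hι_deg v'
        have h3 : (∑ j, if j = i then 1 else 0) = 1 := by simp
        omega
      have h := hmom (fun j => ι u' j + ι v' j + if j = i then 1 else 0) hdeg
      have hfe : (fun x : Fin d → ℝ => ∏ j, x j ^ (ι u' j + ι v' j + if j = i then 1 else 0))
          = fun x => x i * ∏ j, x j ^ (ι u' j + ι v' j) := by
        funext x
        have hx : ∀ j : Fin d, x j ^ (ι u' j + ι v' j + if j = i then 1 else 0)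
            = x j ^ (ι u' j + ι v' j) * (if j = i then x j else 1) := by
          intro j; by_cases hj : j = i <;> simp [hj, pow_succ]
        rw [Finset.prod_congr rfl fun j _ => hx j, Finset.prod_mul_distrib]
        simp [mul_comm]
      rwa [hfe] at h
    have hMG : ∀ u' v' : Fin S, G u' v' = ∫ x, (1 : ℝ) * ∏ j, x j ^ (ι u' j + ι v' j) ∂μ := by
      intro u' v'; simp [hG u' v']
    have hA := key (fun _ => (1 : ℝ)) G hint1 hMG w
    have hB := key (fun x => x i) (H i) hint2 (fun u' v' => hH i u' v') w
    -- relate quadratic forms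
    have hLTv : L.transpose *ᵥ w = v := by
      rw [hw, Matrix.mulVec_mulVec, hLTinv, Matrix.one_mulVec]
    have h2 : v ⬝ᵥ v = w ⬝ᵥ (G *ᵥ w) := by
      rw [← hLLT, ← Matrix.mulVec_mulVec, hLTv, Matrix.dotProduct_mulVec,
        ← Matrix.mulVec_transpose, hLTv]
    have h1 : v ⬝ᵥ (Hhat i *ᵥ v) = w ⬝ᵥ (H i *ᵥ w) := by
      rw [hHhat i, ← Matrix.mulVec_mulVec, ← Matrix.mulVec_mulVec,
        Matrix.dotProduct_mulVec]
      congr 1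
      rw [← Matrix.mulVec_transpose, Matrix.transpose_nonsing_inv]
    have hvv : 0 < v ⬝ᵥ v := by
      rcases lt_or_eq_of_le (Finset.sum_nonneg fun j _ => mul_self_nonneg (v j)) with h | h
      · exact h
      · exact absurd (dotProduct_self_eq_zero.1 h.symm) hv
    have hc : v ⬝ᵥ (Hhat i *ᵥ v) = c * (v ⬝ᵥ v) := by
      rw [heq, dotProduct_smul]; rfl
    -- integrability of p ^ 2 and x i * p ^ 2
    have hip2 : Integrable (fun x => (∑ u', w u' * ∏ j, x j ^ ι u' j) ^ 2) μ := by
      have he : (fun x : Fin d → ℝ => (∑ u', w u' * ∏ j, x j ^ ι u' j) ^ 2)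
          = fun x => ∑ u', ∑ v', (w u' * w v') * ((1 : ℝ) * ∏ j, x j ^ (ι u' j + ι v' j)) := by
        funext x
        have := hpt (fun _ => (1 : ℝ)) w x
        simpa using this
      rw [he]
      exact integrable_finset_sum _ fun u' _ =>
        integrable_finset_sum _ fun v' _ => (hint1 u' v').const_mul _
    have hixp2 : Integrable (fun x => x i * (∑ u', w u' * ∏ j, x j ^ ι u' j) ^ 2) μ := by
      have he : (fun x : Fin d → ℝ => x i * (∑ u', w u' * ∏ j, x j ^ ι u' j) ^ 2)
          = fun x => ∑ u', ∑ v', (w u' * w v') * (x i * ∏ j, x j ^ (ι u' j + ι v' j)) :=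
        funext fun x => hpt (fun x => x i) w x
      rw [he]
      exact integrable_finset_sum _ fun u' _ =>
        integrable_finset_sum _ fun v' _ => (hint2 u' v').const_mul _
    -- integral comparison
    have hub : ∫ x, x i * (∑ u', w u' * ∏ j, x j ^ ι u' j) ^ 2 ∂μ
        ≤ b i * ∫ x, (∑ u', w u' * ∏ j, x j ^ ι u' j) ^ 2 ∂μ := by
      rw [← MeasureTheory.integral_const_mul]
      refine integral_mono_ae hixp2 (hip2.const_mul _) ?_
      filter_upwards [hsupp] with x hx
      exact mul_le_mul_of_nonneg_right (hx i).2 (sq_nonneg _)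
    have hlb : a i * ∫ x, (∑ u', w u' * ∏ j, x j ^ ι u' j) ^ 2 ∂μ
        ≤ ∫ x, x i * (∑ u', w u' * ∏ j, x j ^ ι u' j) ^ 2 ∂μ := by
      rw [← MeasureTheory.integral_const_mul]
      refine integral_mono_ae (hip2.const_mul _) hixp2 ?_
      filter_upwards [hsupp] with x hx
      exact mul_le_mul_of_nonneg_right (hx i).1 (sq_nonneg _)
    have hA' : v ⬝ᵥ v = ∫ x, (∑ u', w u' * ∏ j, x j ^ ι u' j) ^ 2 ∂μ := by
      rw [h2, hA]; simp
    have hAB : c * (v ⬝ᵥ v) = ∫ x, x i * (∑ u', w u' * ∏ j, x j ^ ι u' j) ^ 2 ∂μ := by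
      rw [← hc, h1, hB]
    constructor
    · have hx := hlb
      rw [← hA', ← hAB] at hx
      exact le_of_mul_le_mul_right hx hvv
    · have hx := hub
      rw [← hA', ← hAB] at hx
      exact le_of_mul_le_mul_right hx hvv
  refine ⟨main, fun q => ?_⟩
  rw [Set.mem_univ_pi]
  intro i
  refine main i (lam i (q i)) (u i (q i)) ?_ (heig i (q i))
  intro h0
  have := hu_orth i (q i) (q i)
  rw [h0] at this
  simp at this
end

section
/- Let μ be a probability measure on ℝ with finite moments m_j = ∫ x^j dμ(x) for j = 0, 1, …, 2N−1 (so m_0 = 1). Let G ∈ ℝ^{N×N} be the Hankel matrix with entries G_{ij} = m_{i+j} (indices 0 ≤ i, j ≤ N−1), assumed positive definite with lower-triangular Cholesky factor L, let H ∈ ℝ^{N×N} have entries H_{ij} = m_{i+j+1}, and set J = L⁻¹ H (Lᵀ)⁻¹. Let λ_1, …, λ_N be the eigenvalues of the symmetric matrix J with corresponding orthonormal eigenvectors u_1, …, u_N, and define weights w_n = (u_{n,1})², the square of the first component of u_n. Then the weights are nonnegative, ∑_{n=1}^N w_n = 1, and the quadrature is exact up to degree 2N−1: ∑_{n=1}^N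 w_n λ_n^j = m_j for every j = 0, 1, …, 2N−1. -/
open MeasureTheory Matrix Finset

/-! Let `ℓ_a` be the rows of `L`, so that `ℓ_aᵀ ℓ_b = m_{a+b}` and `ℓ_aᵀ J ℓ_b = m_{a+b+1}`.
Since `H` is `G` with its columns shifted by one, `J ℓ_a = ℓ_{a+1}`, and lower triangularity
with `G₀₀ = 1` gives `ℓ₀ = ±e₀`. Writing `j = 2a` or `2a + 1 ≤ 2N - 1`, the symmetry of `J`
turns `e₀ᵀ Jʲ e₀` into `ℓ_aᵀ ℓ_a` or `ℓ_aᵀ J ℓ_a`, i.e. `m_j`, while expanding `e₀` in the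
orthonormal eigenbasis gives `e₀ᵀ Jʲ e₀ = ∑ₙ wₙ λₙʲ`. -/

namespace Matrix

section

variable {ι R : Type*} [Fintype ι] [CommRing R]

theorem IsSymm.mul_mul_transpose {H : Matrix ι ι R} (hH : H.IsSymm)
    (A : Matrix ι ι R) : (A * H * Aᵀ).IsSymm := by
  rw [IsSymm, transpose_mul, transpose_mul, transpose_transpose, hH.eq, Matrix.mul_assoc]

theorem IsSymm.mulVec_dotProduct {S : Matrix ι ι R} (hS : S.IsSymm)
    (x y : ι → R) : S *ᵥ x ⬝ᵥ y = x ⬝ᵥ S *ᵥ y := by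
  rw [dotProduct_mulVec, ← vecMul_transpose, hS.eq]

theorem row_dotProduct_row (L : Matrix ι ι R) (a b : ι) :
    L.row a ⬝ᵥ L.row b = (L * Lᵀ) a b :=
  rfl

theorem row_dotProduct_mulVec_row (L M : Matrix ι ι R) (a b : ι) :
    L.row a ⬝ᵥ M *ᵥ L.row b = (L * M * Lᵀ) a b :=
  (mul_mul_apply L M Lᵀ a b).symm

variable [DecidableEq ι]

theorem pow_mulVec_of_mulVec_eq_smul {J : Matrix ι ι R} {v : ι → R} {c : R}
    (h : J *ᵥ v = c • v) (k : ℕ) : J ^ k *ᵥ v = c ^ k • v := by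
  induction k with
  | zero => simp
  | succ k ih => rw [pow_succ', ← mulVec_mulVec, ih, mulVec_smul, h, smul_smul, pow_succ]

variable {u : ι → ι → R}

theorem transpose_of_mul_of_eq_one (hu : ∀ a b, u a ⬝ᵥ u b = if a = b then 1 else 0) :
    (of u)ᵀ * of u = 1 := by
  rw [mul_eq_one_comm]
  ext a b
  exact hu a b

theorem sum_dotProduct_smul_eq_self (hu : ∀ a b, u a ⬝ᵥ u b = if a = b then 1 else 0)
    (y : ι → R) : ∑ a, (y ⬝ᵥ u a) • u a = y := by
  have h := congrArg (y ᵥ* ·) (transpose_of_mul_of_eq_one hu)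
  rw [← vecMul_vecMul, vecMul_one, vecMul_transpose, vecMul_eq_sum] at h
  simp only [mulVec, dotProduct_comm] at h
  exact h

theorem dotProduct_pow_mulVec_eq_sum (hu : ∀ a b, u a ⬝ᵥ u b = if a = b then 1 else 0)
    {J : Matrix ι ι R} {lam : ι → R} (heig : ∀ a, J *ᵥ u a = lam a • u a) (x y : ι → R)
    (k : ℕ) : x ⬝ᵥ J ^ k *ᵥ y = ∑ a, (x ⬝ᵥ u a) * (y ⬝ᵥ u a) * lam a ^ k := by
  conv_lhs => rw [← sum_dotProduct_smul_eq_self hu y]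
  simp only [mulVec_sum, mulVec_smul, pow_mulVec_of_mulVec_eq_smul (heig _), dotProduct_sum,
    dotProduct_smul, smul_eq_mul]
  exact Finset.sum_congr rfl fun a _ => by ring

end

section

variable {R : Type*} {N : ℕ}

def hankel (N : ℕ) (m : ℕ → R) : Matrix (Fin N) (Fin N) R :=
  of fun i j => m (i + j)

@[simp]
theorem hankel_apply (m : ℕ → R) (i j : Fin N) : hankel N m i j = m (i + j) :=
  rfl

theorem isSymm_hankel (m : ℕ → R) : (hankel N m).IsSymm :=
  IsSymm.ext fun i j => by simp [add_comm]

variable [CommRing R]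

theorem row_zero_eq_single [NeZero N] {L : Matrix (Fin N) (Fin N) R}
    (hL : ∀ i j : Fin N, i < j → L i j = 0) : L.row 0 = Pi.single 0 (L 0 0) := by
  funext j
  rcases eq_or_ne j 0 with rfl | hj
  · simp [row]
  · rw [row, hL 0 j (Fin.pos_iff_ne_zero.2 hj), Pi.single_eq_of_ne hj]

variable {m : ℕ → R} {L J : Matrix (Fin N) (Fin N) R}

theorem row_zero_of_lower_triangular [NeZero N] (hlower : ∀ i j : Fin N, i < j → L i j = 0)
    (hm0 : m 0 = 1) (hG : L * Lᵀ = hankel N m) :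
    L 0 0 * L 0 0 = 1 ∧ Pi.single 0 1 = L 0 0 • L.row 0 := by
  have hrow := row_zero_eq_single hlower
  have hc : L 0 0 * L 0 0 = 1 := by
    have h00 := row_dotProduct_row L 0 0
    rw [hG, hrow, hankel_apply, single_dotProduct, Pi.single_eq_same] at h00
    simpa [hm0] using h00
  refine ⟨hc, ?_⟩
  rw [hrow, ← Pi.single_smul', smul_eq_mul, hc]

theorem mulVec_row_eq_row_succ (hL : IsUnit L.det) (hG : L * Lᵀ = hankel N m)
    (hH : L * J * Lᵀ = hankel N fun k => m (k + 1)) (a : Fin N) (ha : (a : ℕ) + 1 < N) :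
    J *ᵥ L.row a = L.row ⟨a + 1, ha⟩ := by
  have h : L *ᵥ J *ᵥ L.row a = L *ᵥ L.row ⟨a + 1, ha⟩ := by
    funext i
    change L.row i ⬝ᵥ J *ᵥ L.row a = L.row i ⬝ᵥ L.row ⟨a + 1, ha⟩
    rw [row_dotProduct_mulVec_row, hH, row_dotProduct_row, hG]
    simp [add_assoc]
  simpa [← Matrix.mul_assoc, nonsing_inv_mul L hL] using congrArg (L⁻¹ *ᵥ ·) h

theorem pow_mulVec_row_zero [NeZero N] (hL : IsUnit L.det) (hG : L * Lᵀ = hankel N m)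
    (hH : L * J * Lᵀ = hankel N fun k => m (k + 1)) (a : ℕ) (ha : a < N) :
    J ^ a *ᵥ L.row 0 = L.row ⟨a, ha⟩ := by
  induction a with
  | zero => simp
  | succ a ih =>
    rw [pow_succ', ← mulVec_mulVec, ih (by omega), mulVec_row_eq_row_succ hL hG hH]

theorem single_dotProduct_pow_mulVec_single_eq_of_hankel [NeZero N]
    (hlower : ∀ i j : Fin N, i < j → L i j = 0) (hL : IsUnit L.det) (hm0 : m 0 = 1)
    (hG : L * Lᵀ = hankel N m) (hJ : J = L⁻¹ * hankel N (fun k => m (k + 1)) * Lᵀ⁻¹)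
    {j : ℕ} (hj : j ≤ 2 * N - 1) :
    Pi.single 0 1 ⬝ᵥ J ^ j *ᵥ Pi.single 0 1 = m j := by
  have hH : L * J * Lᵀ = hankel N fun k => m (k + 1) := by
    rw [hJ, ← Matrix.mul_assoc, ← Matrix.mul_assoc, mul_nonsing_inv L hL, Matrix.one_mul,
      Matrix.mul_assoc, nonsing_inv_mul _ (by rwa [det_transpose]), Matrix.mul_one]
  have hJsymm : J.IsSymm := by
    rw [hJ, ← transpose_nonsing_inv]
    exact (isSymm_hankel _).mul_mul_transpose _
  obtain ⟨hc, he0⟩ := row_zero_of_lower_triangular hlower hm0 hG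
  have hkrylov := pow_mulVec_row_zero hL hG hH
  rw [he0, smul_dotProduct, mulVec_smul, dotProduct_smul, smul_smul, hc, one_smul]
  have hN := NeZero.pos N
  obtain ⟨a, rfl | rfl⟩ := Nat.even_or_odd' j
  · have ha : a < N := by omega
    rw [two_mul, pow_add, ← mulVec_mulVec, ← (hJsymm.pow a).mulVec_dotProduct, hkrylov a ha,
      row_dotProduct_row, hG, hankel_apply]
  · have ha : a < N := by omega
    rw [show 2 * a + 1 = a + (a + 1) by ring, pow_add, pow_succ', ← mulVec_mulVec,
      ← (hJsymm.pow a).mulVec_dotProduct, ← mulVec_mulVec, hkrylov a ha,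
      row_dotProduct_mulVec_row, hH, hankel_apply]
    rfl

end

end Matrix

theorem moment_quadrature_1d_exactness_general
    (N : ℕ) (hN : 0 < N)
    (μ : Measure ℝ) [IsProbabilityMeasure μ]
    (G : Matrix (Fin N) (Fin N) ℝ)
    (hG : ∀ i j : Fin N, G i j = ∫ x, x ^ ((i : ℕ) + (j : ℕ)) ∂μ)
    (hGpd : G.PosDef)
    (L : Matrix (Fin N) (Fin N) ℝ)
    (hL_lower : ∀ i j : Fin N, i < j → L i j = 0)
    (hLLT : L * L.transpose = G)
    (H : Matrix (Fin N) (Fin N) ℝ)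
    (hH : ∀ i j : Fin N, H i j = ∫ x, x ^ ((i : ℕ) + (j : ℕ) + 1) ∂μ)
    (J : Matrix (Fin N) (Fin N) ℝ)
    (hJ : J = L⁻¹ * H * (L.transpose)⁻¹)
    (lam : Fin N → ℝ) (u : Fin N → (Fin N → ℝ))
    (hu_orth : ∀ n m, u n ⬝ᵥ u m = if n = m then (1 : ℝ) else 0)
    (heig : ∀ n, J *ᵥ u n = lam n • u n)
    (w : Fin N → ℝ)
    (hw : ∀ n, w n = (u n ⟨0, hN⟩) ^ 2) :
    (∀ n, 0 ≤ w n) ∧ (∑ n, w n = 1) ∧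
      (∀ j ≤ 2 * N - 1, ∑ n, w n * lam n ^ j = ∫ x, x ^ j ∂μ) := by
  have : NeZero N := ⟨hN.ne'⟩
  have hG_hankel : G = hankel N fun j => ∫ x, x ^ j ∂μ := ext hG
  have hH_hankel : H = hankel N fun j => ∫ x, x ^ (j + 1) ∂μ := ext hH
  have hL : IsUnit L.det := by
    refine isUnit_iff_ne_zero.2 fun h => hGpd.det_pos.ne' ?_
    rw [← hLLT, det_mul, h, zero_mul]
  have hmoment (j : ℕ) (hj : j ≤ 2 * N - 1) :
      Pi.single 0 1 ⬝ᵥ J ^ j *ᵥ Pi.single 0 1 = ∫ x, x ^ j ∂μ :=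
    single_dotProduct_pow_mulVec_single_eq_of_hankel hL_lower hL (by simp)
      (hLLT.trans hG_hankel) (hJ.trans (by rw [hH_hankel])) hj
  have hquadrature (k : ℕ) :
      Pi.single 0 1 ⬝ᵥ J ^ k *ᵥ Pi.single 0 1 = ∑ n, w n * lam n ^ k := by
    simp only [dotProduct_pow_mulVec_eq_sum hu_orth heig, single_dotProduct, one_mul, hw,
      Fin.mk_zero', sq]
  refine ⟨fun n => hw n ▸ sq_nonneg _, ?_, fun j hj => (hquadrature j).symm.trans (hmoment j hj)⟩
  simpa using (hquadrature 0).symm.trans (hmoment 0 (Nat.zero_le _))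

/-- Unidimensional moment quadrature: with `G` the `N × N` Hankel moment matrix
(positive definite, with lower-triangular Cholesky factor `L`), `H` the shifted Hankel matrix,
`J = L⁻¹ H (Lᵀ)⁻¹`, eigenvalues `lam n` of `J` with orthonormal eigenvectors `u n`, and weights
`w n = (u n)₁²` (square of the first component), the weights are nonnegative, sum to `1`, and
the quadrature is exact up to degree `2N − 1`: `∑ₙ wₙ λₙʲ = mⱼ` for all `j ≤ 2N − 1`. -/
theorem moment_quadrature_1d_exactness
    (N : ℕ) (hN : 0 < N)
    (μ : Measure ℝ) [IsProbabilityMeasure μ]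
    (hmom : ∀ j ≤ 2 * N - 1, Integrable (fun x : ℝ => x ^ j) μ)
    (G : Matrix (Fin N) (Fin N) ℝ)
    (hG : ∀ i j : Fin N, G i j = ∫ x, x ^ ((i : ℕ) + (j : ℕ)) ∂μ)
    (hGpd : G.PosDef)
    (L : Matrix (Fin N) (Fin N) ℝ)
    (hL_lower : ∀ i j : Fin N, i < j → L i j = 0)
    (hLLT : L * L.transpose = G)
    (H : Matrix (Fin N) (Fin N) ℝ)
    (hH : ∀ i j : Fin N, H i j = ∫ x, x ^ ((i : ℕ) + (j : ℕ) + 1) ∂μ)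
    (J : Matrix (Fin N) (Fin N) ℝ)
    (hJ : J = L⁻¹ * H * (L.transpose)⁻¹)
    (lam : Fin N → ℝ) (u : Fin N → (Fin N → ℝ))
    (hu_orth : ∀ n m, u n ⬝ᵥ u m = if n = m then (1 : ℝ) else 0)
    (heig : ∀ n, J *ᵥ u n = lam n • u n)
    (w : Fin N → ℝ)
    (hw : ∀ n, w n = (u n ⟨0, hN⟩) ^ 2) :
    (∀ n, 0 ≤ w n) ∧ (∑ n, w n = 1) ∧
      (∀ j ≤ 2 * N - 1, ∑ n, w n * lam n ^ j = ∫ x, x ^ j ∂μ) :=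
  moment_quadrature_1d_exactness_general N hN μ G hG hGpd L hL_lower hLLT H hH J hJ lam u hu_orth
    heig w hw
end

section
/- Let ν be a probability measure on ℝ^d with all moments finite, and let L : ℝ^d → [0, ∞) be a measurable likelihood function with h := ∫ L dν ∈ (0, ∞). Suppose that L and, for every multi-index n ∈ ℕ^d, the function x ↦ x^n L(x) are each either bounded and continuous or polynomial. Let (ν̂_N)_{N≥1} be finite measures on ℝ^d with all moments finite converging weakly and in moments to ν. Then the approximate likelihoods ĥ_N := ∫ L dν̂_N converge to h, and for every multi-index n the approximate posterior moments (ĥ_N)⁻¹ ∫ x^n L(x) dν̂_N(x) converge to the true posterior moments h⁻¹ ∫ x^n L(x) dν(x) as N → ∞. -/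
open MeasureTheory Filter Finset

/-- A measure on `ℝ^d` has all (mixed) moments finite. -/
def HasAllMoments {d : ℕ} (ρ : Measure (Fin d → ℝ)) : Prop :=
  ∀ n : Fin d → ℕ, Integrable (fun x => ∏ i, x i ^ n i) ρ

/-- A sequence of finite measures converges weakly and in moments to a limit measure:
weak convergence (integrals of bounded continuous functions converge) together with
convergence of all mixed moments. -/
def TendstoWeaklyAndInMoments {d : ℕ} (ρ : ℕ → Measure (Fin d → ℝ))
    (ρlim : Measure (Fin d → ℝ)) : Prop :=
  (∀ f : BoundedContinuousFunction (Fin d → ℝ) ℝ,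
    Tendsto (fun N => ∫ x, f x ∂(ρ N)) atTop (nhds (∫ x, f x ∂ρlim))) ∧
  (∀ n : Fin d → ℕ,
    Tendsto (fun N => ∫ x, ∏ i, x i ^ n i ∂(ρ N)) atTop
      (nhds (∫ x, ∏ i, x i ^ n i ∂ρlim)))

/-- A measure with all moments finite is determined by its moments: it is the unique finite
measure with that moment sequence. -/
def DeterminedByMoments {d : ℕ} (ν : Measure (Fin d → ℝ)) : Prop :=
  ∀ ν' : Measure (Fin d → ℝ), IsFiniteMeasure ν' → HasAllMoments ν' →
    (∀ n : Fin d → ℕ, ∫ x, ∏ i, x i ^ n i ∂ν' = ∫ x, ∏ i, x i ^ n i ∂ν) → ν' = ν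

/-- A function `ℝ^d → ℝ` is either bounded and continuous, or a polynomial. -/
def IsBddContOrPoly {d : ℕ} (g : (Fin d → ℝ) → ℝ) : Prop :=
  (Continuous g ∧ ∃ C, ∀ x, |g x| ≤ C) ∨
  (∃ p : MvPolynomial (Fin d) ℝ, ∀ x, g x = MvPolynomial.eval x p)

lemma integral_poly_eq {d : ℕ} (ρ : Measure (Fin d → ℝ)) (hmom : HasAllMoments ρ)
    (p : MvPolynomial (Fin d) ℝ) :
    ∫ x, MvPolynomial.eval x p ∂ρ
      = ∑ n ∈ p.support, MvPolynomial.coeff n p * ∫ x, ∏ i, x i ^ n i ∂ρ := by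
  have h1 : ∀ x : Fin d → ℝ, MvPolynomial.eval x p
      = ∑ n ∈ p.support, MvPolynomial.coeff n p * ∏ i, x i ^ n i := by
    intro x
    rw [MvPolynomial.eval_eq]
    refine Finset.sum_congr rfl fun n _ => ?_
    congr 1
    exact Finset.prod_subset (Finset.subset_univ _)
      (fun i _ hi => by simp [Finsupp.notMem_support_iff.mp hi])
  simp_rw [h1]
  rw [integral_finset_sum]
  · exact Finset.sum_congr rfl fun n _ => integral_const_mul _ _
  · intro n _
    exact (hmom n).const_mul _

lemma key_conv {d : ℕ} (ν : Measure (Fin d → ℝ)) (hνmom : HasAllMoments ν)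
    (νhat : ℕ → Measure (Fin d → ℝ)) (hνhatmom : ∀ N, HasAllMoments (νhat N))
    (hconv : TendstoWeaklyAndInMoments νhat ν)
    (g : (Fin d → ℝ) → ℝ) (hg : IsBddContOrPoly g) :
    Tendsto (fun N => ∫ x, g x ∂(νhat N)) atTop (nhds (∫ x, g x ∂ν)) := by
  rcases hg with ⟨hc, C, hC⟩ | ⟨p, hp⟩
  · exact hconv.1 (BoundedContinuousFunction.ofNormedAddCommGroup g hc C
      (fun x => by simpa [Real.norm_eq_abs] using hC x))
  · simp_rw [hp]
    rw [integral_poly_eq ν hνmom p]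
    have : ∀ N, ∫ x, MvPolynomial.eval x p ∂(νhat N)
        = ∑ n ∈ p.support, MvPolynomial.coeff n p * ∫ x, ∏ i, x i ^ n i ∂(νhat N) :=
      fun N => integral_poly_eq (νhat N) (hνhatmom N) p
    simp_rw [this]
    exact tendsto_finset_sum _ fun n _ => (hconv.2 n).const_mul _

/-- Let `ν` be a probability measure on `ℝ^d` with all moments finite, and
`L ≥ 0` a measurable likelihood with `h = ∫ L dν ∈ (0, ∞)`, such that `L` and each `x ↦ xⁿ L x`
are bounded continuous or polynomial. If finite measures `ν̂_N` with all moments finite converge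
weakly and in moments to `ν`, then the approximate likelihoods `∫ L dν̂_N` converge to `h`, and
all approximate posterior moments converge to the true posterior moments. -/
theorem bayes_update_moment_convergence
    {d : ℕ}
    (ν : Measure (Fin d → ℝ)) [IsProbabilityMeasure ν]
    (hνmom : HasAllMoments ν)
    (L : (Fin d → ℝ) → ℝ) (hLmeas : Measurable L) (hLnonneg : ∀ x, 0 ≤ L x)
    (hLint : Integrable L ν) (hLpos : 0 < ∫ x, L x ∂ν)
    (hL : IsBddContOrPoly L)
    (hxL : ∀ n : Fin d → ℕ, IsBddContOrPoly (fun x => (∏ i, x i ^ n i) * L x))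
    (νhat : ℕ → Measure (Fin d → ℝ)) [∀ N, IsFiniteMeasure (νhat N)]
    (hνhatmom : ∀ N, HasAllMoments (νhat N))
    (hconv : TendstoWeaklyAndInMoments νhat ν) :
    Tendsto (fun N => ∫ x, L x ∂(νhat N)) atTop (nhds (∫ x, L x ∂ν)) ∧
    (∀ n : Fin d → ℕ,
      Tendsto (fun N =>
          (∫ x, L x ∂(νhat N))⁻¹ * ∫ x, (∏ i, x i ^ n i) * L x ∂(νhat N))
        atTop
        (nhds ((∫ x, L x ∂ν)⁻¹ * ∫ x, (∏ i, x i ^ n i) * L x ∂ν))) := by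
  have h1 : Tendsto (fun N => ∫ x, L x ∂(νhat N)) atTop (nhds (∫ x, L x ∂ν)) :=
    key_conv ν hνmom νhat hνhatmom hconv L hL
  refine ⟨h1, fun n => ?_⟩
  have h2 : Tendsto (fun N => ∫ x, (∏ i, x i ^ n i) * L x ∂(νhat N)) atTop
      (nhds (∫ x, (∏ i, x i ^ n i) * L x ∂ν)) :=
    key_conv ν hνmom νhat hνhatmom hconv _ (hxL n)
  exact ((h1.inv₀ hLpos.ne').mul h2)
end
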